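/- arXiv:1912.10511 — 2 statements merged into one kernel-verified Lean document; each statement's English description precedes it below -/
import Mathlib

section
/- Let ψ : [0,∞) → ℝ be smooth and rapidly decaying at infinity, and suppose ψ^{(j)}(0) = 0 for all 0 ≤ j < k (k ∈ ℕ, k ≥ 1). Then ∫₀^∞ r^{-k} ψ(r) dr = (-1/(k-1)!) ∫₀^∞ ln(r) ψ^{(k)}(r) dr, and both integrals converge absolutely. -/
open MeasureTheory Set

open Filter Real Topology
open scoped ContDiff

lemma intOn_Ioc01 {f : ℝ → ℝ} (hm : AEStronglyMeasurable f (volume : Measure ℝ)) {M : ℝ}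
    (hb : ∀ r ∈ Ioc (0:ℝ) 1, |f r| ≤ M) : IntegrableOn f (Ioc 0 1) :=
  Measure.integrableOn_of_bounded (by simp) hm (by
    rw [ae_restrict_iff' measurableSet_Ioc]; exact ae_of_all _ fun r hr => hb r hr)

-- tail integrability by C/r^2
lemma intOn_Ioi1 {f : ℝ → ℝ} (hm : AEStronglyMeasurable f (volume : Measure ℝ)) {C : ℝ}
    (hb : ∀ r : ℝ, 1 ≤ r → |f r| ≤ C / r ^ 2) : IntegrableOn f (Ioi 1) := by
  have hC : 0 ≤ C := by have := hb 1 le_rfl; nlinarith [abs_nonneg (f 1)]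
  have hg : IntegrableOn (fun r : ℝ => C * r ^ (-2:ℝ)) (Ioi 1) :=
    (integrableOn_Ioi_rpow_of_lt (by norm_num) one_pos).const_mul C
  refine Integrable.mono hg hm.restrict ?_
  rw [ae_restrict_iff' measurableSet_Ioi]
  refine ae_of_all _ fun r hr => ?_
  have hr1 : (1:ℝ) ≤ r := le_of_lt hr
  have hr0 : (0:ℝ) < r := lt_of_lt_of_le one_pos hr1
  have : r ^ (-2:ℝ) = (r ^ 2)⁻¹ := by
    rw [show (-2:ℝ) = -(2:ℕ) by norm_num, Real.rpow_neg hr0.le, Real.rpow_natCast]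
  rw [Real.norm_eq_abs, Real.norm_eq_abs, this]
  rw [abs_of_nonneg (by positivity : (0:ℝ) ≤ C * (r^2)⁻¹)]
  calc |f r| ≤ C / r ^ 2 := hb r hr1
    _ = C * (r^2)⁻¹ := by ring

lemma taylor_bound : ∀ (k : ℕ) (ψ : ℝ → ℝ), ContDiff ℝ ∞ ψ →
    (∀ j, j < k → iteratedDeriv j ψ 0 = 0) →
    ∃ C : ℝ, 0 ≤ C ∧ ∀ r ∈ Icc (0:ℝ) 1, |ψ r| ≤ C * r ^ k := by
  intro k
  induction k with
  | zero =>
    intro ψ hs _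
    obtain ⟨C, hC⟩ := isCompact_Icc.exists_bound_of_continuousOn
      (hs.continuous.continuousOn (s := Icc (0:ℝ) 1))
    refine ⟨max C 0, le_max_right _ _, fun r hr => ?_⟩
    rw [pow_zero, mul_one, ← Real.norm_eq_abs]
    exact (hC r hr).trans (le_max_left _ _)
  | succ k ih =>
    intro ψ hs hv
    have hd : Differentiable ℝ ψ := hs.differentiable (by simp)
    have hs' : ContDiff ℝ ∞ (deriv ψ) := (contDiff_infty_iff_deriv.mp hs).2
    have hv' : ∀ j, j < k → iteratedDeriv j (deriv ψ) 0 = 0 := fun j hj => by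
      rw [← iteratedDeriv_succ']; exact hv (j+1) (by omega)
    obtain ⟨C, hC0, hC⟩ := ih (deriv ψ) hs' hv'
    refine ⟨C, hC0, fun r hr => ?_⟩
    have hψ0 : ψ 0 = 0 := by simpa [iteratedDeriv_zero] using hv 0 (by omega)
    have hftc : ∫ t in (0:ℝ)..r, deriv ψ t = ψ r - ψ 0 :=
      intervalIntegral.integral_deriv_eq_sub (fun x _ => hd x) 
        ((hs'.continuous).intervalIntegrable 0 r)
    have h1 : |ψ r| = |∫ t in (0:ℝ)..r, deriv ψ t| := by rw [hftc, hψ0, sub_zero]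
    have h2 : |∫ t in (0:ℝ)..r, deriv ψ t| ≤ ∫ t in (0:ℝ)..r, |deriv ψ t| :=
      intervalIntegral.abs_integral_le_integral_abs hr.1
    have h3 : ∫ t in (0:ℝ)..r, |deriv ψ t| ≤ ∫ t in (0:ℝ)..r, C * t ^ k := by
      apply intervalIntegral.integral_mono_on hr.1
      · exact (hs'.continuous.abs).intervalIntegrable 0 r
      · exact (continuous_const.mul (continuous_pow k)).intervalIntegrable 0 r
      · intro x hx
        exact hC x ⟨hx.1, hx.2.trans hr.2⟩
    have h4 : ∫ t in (0:ℝ)..r, C * t ^ k = C * (r ^ (k+1) / (k+1)) := by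
      rw [intervalIntegral.integral_const_mul, integral_pow]
      simp
    have h5 : C * (r ^ (k+1) / (k+1)) ≤ C * r ^ (k+1) := by
      apply mul_le_mul_of_nonneg_left _ hC0
      have hrp : (0:ℝ) ≤ r ^ (k+1) := pow_nonneg hr.1 _
      have : (1:ℝ) ≤ (k+1:ℝ) := by exact_mod_cast Nat.one_le_iff_ne_zero.mpr (Nat.succ_ne_zero k)
      calc r ^ (k+1) / (k+1:ℝ) ≤ r ^ (k+1) / 1 := by
            apply div_le_div_of_nonneg_left hrp one_pos this |>.trans_eq rfl
        _ = r ^ (k+1) := div_one _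
      
    calc |ψ r| ≤ ∫ t in (0:ℝ)..r, |deriv ψ t| := h1 ▸ h2
      _ ≤ C * (r ^ (k+1) / (k+1)) := h3.trans_eq h4
      _ ≤ C * r ^ (k+1) := h5

lemma splitIoi {f : ℝ → ℝ} (h1 : IntegrableOn f (Ioc 0 1)) (h2 : IntegrableOn f (Ioi 1)) :
    IntegrableOn f (Ioi 0) := by
  rw [← Ioc_union_Ioi_eq_Ioi (zero_le_one' ℝ)]
  exact h1.union h2

lemma int_pow_div {ψ : ℝ → ℝ} (hcont : Continuous ψ) (K : ℕ) {C₀ : ℝ}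
    (hC₀ : ∀ r ∈ Icc (0:ℝ) 1, |ψ r| ≤ C₀ * r ^ K)
    {C₁ : ℝ} (hC₁0 : 0 ≤ C₁) (hC₁ : ∀ r : ℝ, 0 ≤ r → |ψ r| ≤ C₁ / (1 + r) ^ (K + 2)) :
    IntegrableOn (fun r : ℝ => ψ r / r ^ K) (Ioi 0) := by
  have hm : AEStronglyMeasurable (fun r : ℝ => ψ r / r ^ K) (volume : Measure ℝ) :=
    (hcont.measurable.div ((continuous_pow K).measurable)).aestronglyMeasurable
  apply splitIoi
  · apply intOn_Ioc01 hm (M := C₀)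
    intro r hr
    have hr0 : 0 < r := hr.1
    have habs : |ψ r / r ^ K| = |ψ r| / r ^ K := by
      rw [abs_div, abs_of_nonneg (by positivity : (0:ℝ) ≤ r ^ K)]
    rw [habs, div_le_iff₀ (by positivity)]
    exact hC₀ r ⟨hr0.le, hr.2⟩
  · apply intOn_Ioi1 hm (C := C₁)
    intro r hr
    have hr0 : 0 < r := lt_of_lt_of_le one_pos hr
    have hb : |ψ r| ≤ C₁ / r ^ (K+2) :=
      (hC₁ r hr0.le).trans (div_le_div_of_nonneg_left hC₁0 (by positivity)
        (pow_le_pow_left₀ hr0.le (by linarith) _))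
    have habs : |ψ r / r ^ K| = |ψ r| / r ^ K := by
      rw [abs_div, abs_of_nonneg (by positivity : (0:ℝ) ≤ r ^ K)]
    rw [habs]
    have hpow : r ^ 2 ≤ r ^ (K+2) * r ^ K := by
      rw [← pow_add]; exact pow_le_pow_right₀ hr (by omega)
    calc |ψ r| / r ^ K ≤ (C₁ / r ^ (K+2)) / r ^ K :=
          (div_le_div_iff_of_pos_right (by positivity)).mpr hb
      _ = C₁ / (r ^ (K+2) * r ^ K) := div_div _ _ _
      _ ≤ C₁ / r ^ 2 := div_le_div_of_nonneg_left hC₁0 (by positivity) hpow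

lemma abs_log_le (r : ℝ) (h0 : 0 < r) (h1 : r ≤ 1) : |Real.log r| ≤ 2 * r ^ (-(1/2) : ℝ) := by
  rw [abs_of_nonpos (Real.log_nonpos h0.le h1)]
  have := Real.log_le_rpow_div (x := r⁻¹) (by positivity) (by norm_num : (0:ℝ) < 1/2)
  rw [Real.log_inv] at this
  calc -Real.log r ≤ r⁻¹ ^ ((1:ℝ)/2) / (1/2) := this
    _ = 2 * r ^ (-(1/2) : ℝ) := by
        rw [← Real.rpow_neg_one r, ← Real.rpow_mul h0.le]
        norm_num
        ring

lemma int_log_mul {g : ℝ → ℝ} (hcont : Continuous g) {C : ℝ} (hC0 : 0 ≤ C)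
    (hb : ∀ r : ℝ, 0 ≤ r → |g r| ≤ C / (1+r)^3) :
    IntegrableOn (fun r : ℝ => Real.log r * g r) (Ioi 0) := by
  have hm : AEStronglyMeasurable (fun r : ℝ => Real.log r * g r) (volume : Measure ℝ) :=
    (Real.measurable_log.mul hcont.measurable).aestronglyMeasurable
  apply splitIoi
  · -- near 0
    have hmaj : IntegrableOn (fun r : ℝ => (2*C) * r ^ (-(1/2) : ℝ)) (Ioc 0 1) := by
      have : IntervalIntegrable (fun r : ℝ => r ^ (-(1/2) : ℝ)) volume 0 1 :=
        intervalIntegral.intervalIntegrable_rpow' (by norm_num)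
      rw [intervalIntegrable_iff_integrableOn_Ioc_of_le zero_le_one] at this
      exact this.const_mul _
    refine Integrable.mono hmaj hm.restrict ?_
    rw [ae_restrict_iff' measurableSet_Ioc]
    refine ae_of_all _ fun r hr => ?_
    have h0 : 0 < r := hr.1
    rw [Real.norm_eq_abs, Real.norm_eq_abs, abs_mul,
      abs_of_nonneg (by positivity : (0:ℝ) ≤ (2*C) * r ^ (-(1/2):ℝ))]
    have h1 : |g r| ≤ C := (hb r h0.le).trans (by
      rw [div_le_iff₀ (by positivity)]
      nlinarith [pow_le_pow_right₀ (by linarith : (1:ℝ) ≤ 1 + r) (by omega : 0 ≤ 3)])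
    calc |Real.log r| * |g r| ≤ (2 * r ^ (-(1/2):ℝ)) * C := by
          apply mul_le_mul (abs_log_le r h0 hr.2) h1 (abs_nonneg _) (by positivity)
      _ = (2*C) * r ^ (-(1/2):ℝ) := by ring
  · apply intOn_Ioi1 hm (C := C)
    intro r hr
    have h0 : 0 < r := lt_of_lt_of_le one_pos hr
    have hlog : |Real.log r| ≤ r := by
      rw [abs_of_nonneg (Real.log_nonneg hr)]
      linarith [Real.log_le_sub_one_of_pos h0]
    have hg : |g r| ≤ C / r ^ 3 := (hb r h0.le).trans
      (div_le_div_of_nonneg_left hC0 (by positivity) (pow_le_pow_left₀ h0.le (by linarith) _))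
    calc |Real.log r * g r| = |Real.log r| * |g r| := abs_mul _ _
      _ ≤ r * (C / r ^ 3) := mul_le_mul hlog hg (abs_nonneg _) h0.le
      _ = C / r ^ 2 := by field_simp

lemma tendsto_of_bound {f : ℝ → ℝ} {C : ℝ} (h : ∀ r : ℝ, 1 ≤ r → |f r| ≤ C / r) :
    Tendsto f atTop (𝓝 0) := by
  have hev : ∀ᶠ r : ℝ in atTop, ‖f r‖ ≤ C / r := by
    filter_upwards [eventually_ge_atTop (1:ℝ)] with r hr
    simpa [Real.norm_eq_abs] using h r hr
  exact squeeze_zero_norm' hev (tendsto_const_nhds.div_atTop tendsto_id)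

-- Base case as standalone lemma
lemma base_case (ψ : ℝ → ℝ) (hs : ContDiff ℝ ∞ ψ)
    (hdecay : ∀ j N : ℕ, ∃ C : ℝ, ∀ r : ℝ, 0 ≤ r → |iteratedDeriv j ψ r| ≤ C / (1 + r) ^ N)
    (hvanish : ∀ j : ℕ, j < 1 → iteratedDeriv j ψ 0 = 0) :
    IntegrableOn (fun r : ℝ => ψ r / r ^ 1) (Ioi 0) ∧
    IntegrableOn (fun r : ℝ => Real.log r * iteratedDeriv 1 ψ r) (Ioi 0) ∧
    ∫ r in Ioi (0:ℝ), ψ r / r ^ 1 =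
      (-1 / (Nat.factorial 0 : ℝ)) * ∫ r in Ioi (0:ℝ), Real.log r * iteratedDeriv 1 ψ r := by
  have hψ0 : ψ 0 = 0 := by simpa [iteratedDeriv_zero] using hvanish 0 one_pos
  have hd : Differentiable ℝ ψ := hs.differentiable (by simp)
  -- Taylor bound |ψ r| ≤ C₀ r on [0,1]
  obtain ⟨C₀, hC₀0, hC₀⟩ := taylor_bound 1 ψ hs hvanish
  -- decay bounds
  obtain ⟨C₁, hC₁⟩ := hdecay 0 3
  have hC₁0 : 0 ≤ C₁ := le_trans (abs_nonneg _) (by simpa using hC₁ 0 le_rfl)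
  have hC₁' : ∀ r : ℝ, 0 ≤ r → |ψ r| ≤ C₁ / (1+r)^3 := by
    intro r hr; simpa [iteratedDeriv_zero] using hC₁ r hr
  obtain ⟨C₂, hC₂⟩ := hdecay 1 3
  have hC₂0 : 0 ≤ C₂ := le_trans (abs_nonneg _) (by simpa using hC₂ 0 le_rfl)
  -- Integrability statements
  have I1 : IntegrableOn (fun r : ℝ => ψ r / r ^ 1) (Ioi 0) :=
    int_pow_div hs.continuous 1 hC₀ hC₁0 hC₁'
  have I2 : IntegrableOn (fun r : ℝ => Real.log r * iteratedDeriv 1 ψ r) (Ioi 0) :=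
    int_log_mul (hs.continuous_iteratedDeriv 1 (by exact_mod_cast le_top)) hC₂0 hC₂
  refine ⟨I1, I2, ?_⟩
  -- FTC
  set F : ℝ → ℝ := fun r => Real.log r * ψ r with hF
  set f' : ℝ → ℝ := fun r => ψ r / r ^ 1 + Real.log r * iteratedDeriv 1 ψ r with hf'
  have hF0 : F 0 = 0 := by simp [hF, hψ0]
  have hderiv : ∀ x ∈ Ioi (0:ℝ), HasDerivAt F (f' x) x := by
    intro x hx
    have hx0 : (0:ℝ) < x := hx
    have h := (Real.hasDerivAt_log hx0.ne').mul (hd x).hasDerivAt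
    refine h.congr_deriv (Eq.symm ?_)
    simp only [hf', iteratedDeriv_one]
    field_simp
  have f'int : IntegrableOn f' (Ioi 0) := I1.add I2
  have hcont : ContinuousWithinAt F (Ici 0) 0 := by
    have hF00 : F 0 = 0 := hF0
    rw [ContinuousWithinAt, hF00]
    have hg : Tendsto (fun r : ℝ => (2*C₀) * Real.sqrt r) (𝓝[Ici (0:ℝ)] 0) (𝓝 0) := by
      have : Tendsto (fun r : ℝ => (2*C₀) * Real.sqrt r) (𝓝 0) (𝓝 ((2*C₀) * Real.sqrt 0)) :=
        (continuous_const.mul Real.continuous_sqrt).tendsto 0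
      simpa using this.mono_left nhdsWithin_le_nhds
    refine squeeze_zero_norm' ?_ hg
    · filter_upwards [Icc_mem_nhdsGE_of_mem (by constructor <;> norm_num :
        (0:ℝ) ∈ Ico (0:ℝ) 1)] with r hr
      rcases eq_or_lt_of_le hr.1 with h | h
      · simp [hF, ← h, Real.sqrt_zero]
      · have h1 : |Real.log r| ≤ 2 * r ^ (-(1/2):ℝ) := abs_log_le r h hr.2
        have h2 : |ψ r| ≤ C₀ * r := by simpa using hC₀ r ⟨h.le, hr.2⟩
        have key : |Real.log r| * |ψ r| ≤ (2 * r ^ (-(1/2):ℝ)) * (C₀ * r) :=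
          mul_le_mul h1 h2 (abs_nonneg _) (by positivity)
        rw [Real.norm_eq_abs, hF, abs_mul]
        refine key.trans (le_of_eq ?_)
        rw [Real.sqrt_eq_rpow]
        rw [show (2 * r ^ (-(1/2):ℝ)) * (C₀ * r) = (2*C₀) * (r ^ (-(1/2):ℝ) * r) by ring]
        congr 1
        nth_rewrite 2 [show r = r ^ (1:ℝ) by rw [Real.rpow_one]]
        rw [← Real.rpow_add h]
        norm_num
  have htail : Tendsto F atTop (𝓝 0) := by
    apply tendsto_of_bound (C := C₁)
    intro r hr
    have h0 : (0:ℝ) < r := lt_of_lt_of_le one_pos hr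
    have hlog : |Real.log r| ≤ r := by
      rw [abs_of_nonneg (Real.log_nonneg hr)]
      linarith [Real.log_le_sub_one_of_pos h0]
    have hg : |ψ r| ≤ C₁ / (1+r)^3 := hC₁' r h0.le
    have h3 : C₁ / (1+r)^3 ≤ C₁ / r^3 :=
      div_le_div_of_nonneg_left hC₁0 (by positivity) (pow_le_pow_left₀ h0.le (by linarith) _)
    calc |F r| = |Real.log r| * |ψ r| := abs_mul _ _
      _ ≤ r * (C₁ / r^3) := mul_le_mul hlog (hg.trans h3) (abs_nonneg _) h0.le
      _ = C₁ / r^2 := by field_simp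
      _ ≤ C₁ / r := by
          apply div_le_div_of_nonneg_left hC₁0 h0
          nlinarith
  have hI : ∫ x in Ioi (0:ℝ), f' x = 0 - F 0 :=
    integral_Ioi_of_hasDerivAt_of_tendsto hcont hderiv f'int htail
  rw [hF0, sub_zero] at hI
  have hsplit : ∫ x in Ioi (0:ℝ), f' x =
      (∫ r in Ioi (0:ℝ), ψ r / r ^ 1) + ∫ r in Ioi (0:ℝ), Real.log r * iteratedDeriv 1 ψ r :=
    integral_add I1 I2
  rw [hsplit] at hI
  have : ∫ r in Ioi (0:ℝ), ψ r / r ^ 1 =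
      - ∫ r in Ioi (0:ℝ), Real.log r * iteratedDeriv 1 ψ r := by linarith
  rw [this]; norm_num [Nat.factorial]

lemma step_case (n : ℕ) (ψ : ℝ → ℝ) (hs : ContDiff ℝ ∞ ψ)
    (hdecay : ∀ j N : ℕ, ∃ C : ℝ, ∀ r : ℝ, 0 ≤ r → |iteratedDeriv j ψ r| ≤ C / (1 + r) ^ N)
    (hvanish : ∀ j : ℕ, j < n + 2 → iteratedDeriv j ψ 0 = 0)
    (ih : ∀ φ : ℝ → ℝ, ContDiff ℝ ∞ φ →
      (∀ j N : ℕ, ∃ C : ℝ, ∀ r : ℝ, 0 ≤ r → |iteratedDeriv j φ r| ≤ C / (1 + r) ^ N) →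
      (∀ j : ℕ, j < n + 1 → iteratedDeriv j φ 0 = 0) →
      IntegrableOn (fun r : ℝ => φ r / r ^ (n+1)) (Ioi 0) ∧
      IntegrableOn (fun r : ℝ => Real.log r * iteratedDeriv (n+1) φ r) (Ioi 0) ∧
      ∫ r in Ioi (0:ℝ), φ r / r ^ (n+1) =
        (-1 / (Nat.factorial n : ℝ)) * ∫ r in Ioi (0:ℝ), Real.log r * iteratedDeriv (n+1) φ r) :
    IntegrableOn (fun r : ℝ => ψ r / r ^ (n+2)) (Ioi 0) ∧
    IntegrableOn (fun r : ℝ => Real.log r * iteratedDeriv (n+2) ψ r) (Ioi 0) ∧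
    ∫ r in Ioi (0:ℝ), ψ r / r ^ (n+2) =
      (-1 / (Nat.factorial (n+1) : ℝ)) *
        ∫ r in Ioi (0:ℝ), Real.log r * iteratedDeriv (n+2) ψ r := by
  have hψ0 : ψ 0 = 0 := by simpa [iteratedDeriv_zero] using hvanish 0 (by omega)
  have hd : Differentiable ℝ ψ := hs.differentiable (by simp)
  have hs' : ContDiff ℝ ∞ (deriv ψ) := (contDiff_infty_iff_deriv.mp hs).2
  have hdecay' : ∀ j N : ℕ, ∃ C : ℝ, ∀ r : ℝ, 0 ≤ r →
      |iteratedDeriv j (deriv ψ) r| ≤ C / (1 + r) ^ N := by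
    intro j N
    obtain ⟨C, hC⟩ := hdecay (j+1) N
    exact ⟨C, fun r hr => by rw [← iteratedDeriv_succ']; exact hC r hr⟩
  have hvanish' : ∀ j : ℕ, j < n + 1 → iteratedDeriv j (deriv ψ) 0 = 0 := fun j hj => by
    rw [← iteratedDeriv_succ']; exact hvanish (j+1) (by omega)
  obtain ⟨I1', I2', Eq'⟩ := ih (deriv ψ) hs' hdecay' hvanish'
  have hiter : iteratedDeriv (n+1) (deriv ψ) = iteratedDeriv (n+2) ψ :=
    iteratedDeriv_succ'.symm
  -- Taylor bound
  obtain ⟨C₀, hC₀0, hC₀⟩ := taylor_bound (n+2) ψ hs hvanish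
  -- decay for ψ with exponent n+4
  obtain ⟨C₁, hC₁⟩ := hdecay 0 (n+4)
  have hC₁0 : 0 ≤ C₁ := le_trans (abs_nonneg _) (by simpa using hC₁ 0 le_rfl)
  have hC₁' : ∀ r : ℝ, 0 ≤ r → |ψ r| ≤ C₁ / (1+r)^(n+2+2) := by
    intro r hr
    have := hC₁ r hr
    rw [iteratedDeriv_zero] at this
    convert this using 3
  have I1 : IntegrableOn (fun r : ℝ => ψ r / r ^ (n+2)) (Ioi 0) :=
    int_pow_div hs.continuous (n+2) hC₀ hC₁0 hC₁'
  obtain ⟨C₂, hC₂⟩ := hdecay (n+2) 3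
  have hC₂0 : 0 ≤ C₂ := le_trans (abs_nonneg _) (by simpa using hC₂ 0 le_rfl)
  have I2 : IntegrableOn (fun r : ℝ => Real.log r * iteratedDeriv (n+2) ψ r) (Ioi 0) :=
    int_log_mul (hs.continuous_iteratedDeriv (n+2) (WithTop.coe_le_coe.2 le_top)) hC₂0 hC₂
  refine ⟨I1, I2, ?_⟩
  have hK0 : ((n:ℝ) + 1) ≠ 0 := by positivity
  set F : ℝ → ℝ := fun r => -(1/((n:ℝ)+1)) * (ψ r / r ^ (n+1)) with hF
  set f' : ℝ → ℝ := fun r => ψ r / r ^ (n+2) - (1/((n:ℝ)+1)) * (deriv ψ r / r ^ (n+1))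
    with hf'
  have hF0 : F 0 = 0 := by simp [hF, hψ0]
  have hderiv : ∀ x ∈ Ioi (0:ℝ), HasDerivAt F (f' x) x := by
    intro x hx
    have hx0 : (0:ℝ) < x := hx
    have h1 : HasDerivAt (fun r : ℝ => ψ r / r ^ (n+1))
        ((deriv ψ x * x ^ (n+1) - ψ x * (((n+1 : ℕ):ℝ) * x ^ n)) / (x ^ (n+1)) ^ 2) x :=
      ((hd x).hasDerivAt).div (hasDerivAt_pow (n+1) x) (pow_ne_zero _ hx0.ne')
    have h2 := h1.const_mul (-(1/((n:ℝ)+1)))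
    refine h2.congr_deriv (Eq.symm ?_)
    simp only [hf']
    have hxne : x ≠ 0 := hx0.ne'
    field_simp
    push_cast
    ring
  have f'int : IntegrableOn f' (Ioi 0) := I1.sub (I1'.const_mul _)
  have hcont : ContinuousWithinAt F (Ici 0) 0 := by
    rw [ContinuousWithinAt, hF0]
    have hg : Tendsto (fun r : ℝ => C₀ * r) (𝓝[Ici (0:ℝ)] 0) (𝓝 0) := by
      have : Tendsto (fun r : ℝ => C₀ * r) (𝓝 0) (𝓝 (C₀ * 0)) :=
        (continuous_const.mul continuous_id).tendsto 0
      simpa using this.mono_left nhdsWithin_le_nhds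
    refine squeeze_zero_norm' ?_ hg
    filter_upwards [Icc_mem_nhdsGE_of_mem (by constructor <;> norm_num :
      (0:ℝ) ∈ Ico (0:ℝ) 1)] with r hr
    rcases eq_or_lt_of_le hr.1 with h | h
    · simp [hF, ← h]
    · have h2 : |ψ r| ≤ C₀ * r ^ (n+2) := hC₀ r ⟨h.le, hr.2⟩
      have hrpow : (0:ℝ) < r ^ (n+1) := by positivity
      rw [Real.norm_eq_abs, hF]
      have habs : |(-(1/((n:ℝ)+1)) * (ψ r / r ^ (n+1)))| =
          (1/((n:ℝ)+1)) * (|ψ r| / r ^ (n+1)) := by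
        rw [abs_mul, abs_div, abs_of_nonneg hrpow.le, abs_neg,
          abs_of_nonneg (by positivity : (0:ℝ) ≤ 1/((n:ℝ)+1))]
      rw [habs]
      have hfrac : (1:ℝ)/((n:ℝ)+1) ≤ 1 := by
        rw [div_le_one (by positivity)]; push_cast; linarith [Nat.cast_nonneg (α := ℝ) n]
      calc (1/((n:ℝ)+1)) * (|ψ r| / r ^ (n+1)) ≤ 1 * (|ψ r| / r ^ (n+1)) := by
            apply mul_le_mul_of_nonneg_right hfrac (by positivity)
        _ = |ψ r| / r ^ (n+1) := one_mul _
        _ ≤ (C₀ * r ^ (n+2)) / r ^ (n+1) := (div_le_div_iff_of_pos_right hrpow).mpr h2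
        _ = C₀ * r := by
            rw [pow_succ]
            field_simp
  have htail : Tendsto F atTop (𝓝 0) := by
    obtain ⟨C₃, hC₃⟩ := hdecay 0 1
    have hC₃0 : 0 ≤ C₃ := le_trans (abs_nonneg _) (by simpa using hC₃ 0 le_rfl)
    apply tendsto_of_bound (C := C₃)
    intro r hr
    have h0 : (0:ℝ) < r := lt_of_lt_of_le one_pos hr
    have hrpow : (1:ℝ) ≤ r ^ (n+1) := one_le_pow₀ hr
    have habs : |F r| = (1/((n:ℝ)+1)) * (|ψ r| / r ^ (n+1)) := by
      rw [hF]
      rw [abs_mul, abs_div, abs_of_nonneg (by positivity : (0:ℝ) ≤ r ^ (n+1)), abs_neg,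
        abs_of_nonneg (by positivity : (0:ℝ) ≤ 1/((n:ℝ)+1))]
    have hfrac : (1:ℝ)/((n:ℝ)+1) ≤ 1 := by
      rw [div_le_one (by positivity)]; linarith [Nat.cast_nonneg (α := ℝ) n]
    have hψb : |ψ r| ≤ C₃ / (1 + r) := by simpa using hC₃ r h0.le
    calc |F r| = (1/((n:ℝ)+1)) * (|ψ r| / r ^ (n+1)) := habs
      _ ≤ 1 * (|ψ r| / r ^ (n+1)) := mul_le_mul_of_nonneg_right hfrac (by positivity)
      _ = |ψ r| / r ^ (n+1) := one_mul _
      _ ≤ |ψ r| := div_le_self (abs_nonneg _) hrpow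
      _ ≤ C₃ / (1 + r) := hψb
      _ ≤ C₃ / r := div_le_div_of_nonneg_left hC₃0 h0 (by linarith)
  have hI : ∫ x in Ioi (0:ℝ), f' x = 0 - F 0 :=
    integral_Ioi_of_hasDerivAt_of_tendsto hcont hderiv f'int htail
  rw [hF0, sub_zero] at hI
  have hsplit : ∫ x in Ioi (0:ℝ), f' x =
      (∫ r in Ioi (0:ℝ), ψ r / r ^ (n+2)) -
        ∫ r in Ioi (0:ℝ), (1/((n:ℝ)+1)) * (deriv ψ r / r ^ (n+1)) :=
    integral_sub I1 (I1'.const_mul _)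
  rw [hsplit, MeasureTheory.integral_const_mul] at hI
  rw [hiter] at Eq'
  have hfacne : ((Nat.factorial n : ℝ)) ≠ 0 := Nat.cast_ne_zero.mpr n.factorial_ne_zero
  calc ∫ r in Ioi (0:ℝ), ψ r / r ^ (n+2)
      = (1/((n:ℝ)+1)) * ∫ r in Ioi (0:ℝ), deriv ψ r / r ^ (n+1) := by linarith
    _ = (1/((n:ℝ)+1)) * ((-1 / (Nat.factorial n : ℝ)) *
        ∫ r in Ioi (0:ℝ), Real.log r * iteratedDeriv (n+2) ψ r) := by rw [Eq']
    _ = (-1 / (Nat.factorial (n+1) : ℝ)) *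
        ∫ r in Ioi (0:ℝ), Real.log r * iteratedDeriv (n+2) ψ r := by
        rw [Nat.factorial_succ]
        push_cast
        field_simp

lemma key : ∀ (n : ℕ) (ψ : ℝ → ℝ), ContDiff ℝ ∞ ψ →
    (∀ j N : ℕ, ∃ C : ℝ, ∀ r : ℝ, 0 ≤ r → |iteratedDeriv j ψ r| ≤ C / (1 + r) ^ N) →
    (∀ j : ℕ, j < n + 1 → iteratedDeriv j ψ 0 = 0) →
    IntegrableOn (fun r : ℝ => ψ r / r ^ (n+1)) (Ioi 0) ∧
    IntegrableOn (fun r : ℝ => Real.log r * iteratedDeriv (n+1) ψ r) (Ioi 0) ∧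
    ∫ r in Ioi (0:ℝ), ψ r / r ^ (n+1) =
      (-1 / (Nat.factorial n : ℝ)) *
        ∫ r in Ioi (0:ℝ), Real.log r * iteratedDeriv (n+1) ψ r := by
  intro n
  induction n with
  | zero => exact fun ψ hs hd hv => base_case ψ hs hd hv
  | succ n ih => exact fun ψ hs hd hv => step_case n ψ hs hd hv ih

/-- If `ψ` is smooth on `[0,∞)` (here: smooth on `ℝ`), rapidly decaying
together with all derivatives at infinity, and `ψ⁽ʲ⁾(0) = 0` for `0 ≤ j < k`, then
`∫₀^∞ r^{-k} ψ(r) dr = (-1/(k-1)!) ∫₀^∞ ln r · ψ⁽ᵏ⁾(r) dr`, both integrals being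
absolutely convergent. -/
theorem stmt0 (ψ : ℝ → ℝ) (k : ℕ) (hk : 1 ≤ k)
    (hsmooth : ContDiff ℝ (⊤ : ℕ∞) ψ)
    (hdecay : ∀ j N : ℕ, ∃ C : ℝ, ∀ r : ℝ, 0 ≤ r →
      |iteratedDeriv j ψ r| ≤ C / (1 + r) ^ N)
    (hvanish : ∀ j : ℕ, j < k → iteratedDeriv j ψ 0 = 0) :
    IntegrableOn (fun r : ℝ => ψ r / r ^ k) (Ioi 0) ∧
    IntegrableOn (fun r : ℝ => Real.log r * iteratedDeriv k ψ r) (Ioi 0) ∧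
    ∫ r in Ioi (0 : ℝ), ψ r / r ^ k =
      (-1 / (Nat.factorial (k - 1) : ℝ)) *
        ∫ r in Ioi (0 : ℝ), Real.log r * iteratedDeriv k ψ r := by
  obtain ⟨n, rfl⟩ : ∃ n, k = n + 1 := ⟨k - 1, (Nat.succ_pred_eq_of_pos hk).symm⟩
  have hs : ContDiff ℝ ∞ ψ := hsmooth.of_le (by simp)
  simpa using key n ψ hs hdecay hvanish
end

section
/- Let ψ : [0,∞) → ℝ be smooth and rapidly decaying at infinity, let a > 0 and k ∈ ℕ with k ≥ 1, and suppose ψ^{(j)}(a) = 0 for all 0 ≤ j < k. Then the (absolutely convergent) integral ∫₀^∞ (r-a)^{-k} ψ(r) dr equals (-1/(k-1)!) ∫₀^∞ ln|r-a| ψ^{(k)}(r) dr + C₀, where C₀ = Σ_{l=1}^{k-1} ((-a)^{l-k}/((k-1)·(k-2)⋯(k-l))) ψ^{(l-1)}(0) − (ln a/(k-1)!) ψ^{(k-1)}(0). -/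
open MeasureTheory Set

open Filter

set_option maxHeartbeats 1000000

lemma intSq (b : ℝ) (hb : 0 ≤ b) : IntegrableOn (fun r : ℝ => ((1 + r) ^ 2)⁻¹) (Ioi b) := by
  have hderiv : ∀ x ∈ Ioi b, HasDerivAt (fun r : ℝ => -((1 + r)⁻¹)) (((1 + x) ^ 2)⁻¹) x := by
    intro x hx
    have h1 : (0:ℝ) < 1 + x := by simp only [mem_Ioi] at hx; linarith
    have h : HasDerivAt (fun r : ℝ => 1 + r) 1 x := (hasDerivAt_id x).const_add 1
    have := (h.inv h1.ne').neg
    refine this.congr_deriv ?_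
    ring
  have hcont : ContinuousWithinAt (fun r : ℝ => -((1 + r)⁻¹)) (Ici b) b := by
    have h1 : (0:ℝ) < 1 + b := by linarith
    exact (((continuousAt_const.add continuousAt_id).inv₀ h1.ne').neg).continuousWithinAt
  have ht0 : Tendsto (fun r : ℝ => (1 + r)) atTop atTop :=
    tendsto_atTop_add_const_left _ 1 tendsto_id
  have ht1 : Tendsto (fun r : ℝ => (1 + r)⁻¹) atTop (nhds 0) := ht0.inv_tendsto_atTop
  have htend : Tendsto (fun r : ℝ => -((1 + r)⁻¹)) atTop (nhds 0) := by
    simpa using ht1.neg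
  exact integrableOn_Ioi_deriv_of_nonneg hcont hderiv (fun x hx => by positivity) htend

/-- log is interval integrable on [0, c] for c ≥ 0 -/
lemma logII (c : ℝ) (hc : 0 ≤ c) : IntervalIntegrable Real.log volume 0 c := by
  have h01 : IntervalIntegrable Real.log volume 0 1 := by
    rw [intervalIntegrable_iff_integrableOn_Ioc_of_le zero_le_one]
    have hneg : IntegrableOn (fun x : ℝ => -Real.log x) (Ioc 0 1) := by
      apply intervalIntegral.integrableOn_deriv_of_nonneg (g := fun x : ℝ => x - x * Real.log x)
      · exact (continuous_id.sub Real.continuous_mul_log).continuousOn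
      · intro x hx
        have hx0 : x ≠ 0 := ne_of_gt hx.1
        have h1 : HasDerivAt (fun y : ℝ => y * Real.log y) (Real.log x + 1) x := by
          have := ((hasDerivAt_id x).mul (Real.hasDerivAt_log hx0))
          refine this.congr_deriv ?_
          simp only [id_eq, mul_inv_cancel₀ hx0]; ring
        have := (hasDerivAt_id x).sub h1
        refine this.congr_deriv ?_
        ring
      · intro x hx
        simp only [neg_nonneg]
        exact Real.log_nonpos (le_of_lt hx.1) (le_of_lt hx.2)
    exact hneg.neg.congr (Filter.EventuallyEq.of_eq (funext fun x => by simp))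
  rcases le_total c 1 with h | h
  · exact h01.mono_set (by rw [uIcc_of_le hc, uIcc_of_le zero_le_one]; exact Icc_subset_Icc le_rfl h)
  · have h1c : IntervalIntegrable Real.log volume 1 c :=
      (Real.continuousOn_log.mono (by intro x hx; rw [uIcc_of_le h] at hx; simp; intro h0; linarith [hx.1])).intervalIntegrable
    exact h01.trans h1c


lemma logShift (a : ℝ) (ha : 0 < a) :
    IntegrableOn (fun r : ℝ => Real.log (r - a)) (Ioc 0 (a + 1)) := by
  have key : ∀ c : ℝ, 0 ≤ c → IntervalIntegrable Real.log volume 0 c := fun c hc => logII c hc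
  have h2 : IntegrableOn (fun r : ℝ => Real.log (r - a)) (Ioc a (a + 1)) := by
    have := (key 1 zero_le_one).comp_sub_right a
    rw [show (0:ℝ) + a = a by ring, show (1:ℝ) + a = a + 1 by ring] at this
    exact (intervalIntegrable_iff_integrableOn_Ioc_of_le (by linarith)).mp this
  have h1 : IntegrableOn (fun r : ℝ => Real.log (r - a)) (Ioc 0 a) := by
    have heq : (fun r : ℝ => Real.log (r - a)) = fun r : ℝ => Real.log (a - r) := by
      funext r; rw [← Real.log_neg_eq_log, neg_sub]
    rw [heq]
    have := (key a ha.le).comp_sub_left a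
    rw [show a - 0 = a by ring, sub_self] at this
    exact (intervalIntegrable_iff_integrableOn_Ioc_of_le ha.le).mp this.symm
  have hu : Ioc (0:ℝ) a ∪ Ioc a (a+1) = Ioc 0 (a+1) := Ioc_union_Ioc_eq_Ioc ha.le (by linarith)
  rw [← hu]
  exact h1.union h2


/-- Taylor-type bound -/
lemma vbound (a M : ℝ) (ha : 0 < a) :
    ∀ (m : ℕ) (g : ℝ → ℝ), ContDiff ℝ (⊤:ℕ∞) g → (∀ i < m, iteratedDeriv i g a = 0) →
      (∀ r : ℝ, 0 ≤ r → |iteratedDeriv m g r| ≤ M) →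
      ∀ r : ℝ, 0 ≤ r → |g r| ≤ M * |r - a| ^ m := by
  intro m
  induction m with
  | zero =>
    intro g _ _ hM r hr
    simpa using hM r hr
  | succ m ih =>
    intro g hg hvan hM r hr
    have hM0 : 0 ≤ M := le_trans (abs_nonneg _) (hM 0 le_rfl)
    have hg' : ContDiff ℝ (⊤:ℕ∞) (deriv g) := (contDiff_infty_iff_deriv.mp hg).2
    have hvan' : ∀ i < m, iteratedDeriv i (deriv g) a = 0 := by
      intro i hi
      rw [← iteratedDeriv_succ']
      exact hvan (i+1) (by omega)
    have hM' : ∀ r : ℝ, 0 ≤ r → |iteratedDeriv m (deriv g) r| ≤ M := by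
      intro r hr
      rw [← iteratedDeriv_succ']
      exact hM r hr
    have hb := ih (deriv g) hg' hvan' hM'
    have hga : g a = 0 := by
      have := hvan 0 (by omega); simpa [iteratedDeriv_zero] using this
    have hderivCont : Continuous (deriv g) := hg'.continuous
    have hftc : ∫ y in a..r, deriv g y = g r - g a := by
      apply intervalIntegral.integral_deriv_eq_sub
      · intro x _; exact hg.differentiable (by simp) x
      · exact hderivCont.intervalIntegrable a r
    have hbnd : |∫ y in a..r, deriv g y| ≤ M * |r - a| ^ (m + 1) := by
      rcases le_total a r with h | h
      · have h1 : |∫ y in a..r, deriv g y| ≤ ∫ y in a..r, M * (y - a) ^ m := by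
          rw [← Real.norm_eq_abs]
          refine (intervalIntegral.norm_integral_le_integral_norm h).trans ?_
          apply intervalIntegral.integral_mono_on h
          · exact (hderivCont.norm.intervalIntegrable a r)
          · exact ((continuous_const.mul (((continuous_id.sub continuous_const).pow m))).intervalIntegrable a r)
          · intro x hx
            have h0x : 0 ≤ x := le_trans ha.le hx.1
            have := hb x h0x
            rw [Real.norm_eq_abs]
            rwa [abs_of_nonneg (by linarith [hx.1] : (0:ℝ) ≤ x - a)] at this
        have h2 : ∫ y in a..r, M * (y - a) ^ m = M * ((r - a) ^ (m+1) / (m+1)) := by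
          rw [intervalIntegral.integral_const_mul]
          have := intervalIntegral.integral_comp_sub_right (fun x : ℝ => x ^ m) a (a := a) (b := r)
          rw [this, sub_self, integral_pow]
          ring
        refine h1.trans ?_
        rw [h2, abs_of_nonneg (by linarith : (0:ℝ) ≤ r - a)]
        have hpos : (0:ℝ) ≤ (r-a)^(m+1) := pow_nonneg (by linarith) _
        have : (r - a)^(m+1) / (m+1) ≤ (r-a)^(m+1) := by
          apply div_le_self hpos; norm_num
        nlinarith
      · have hswap : |∫ y in a..r, deriv g y| = |∫ y in r..a, deriv g y| := by
          rw [intervalIntegral.integral_symm]; rw [abs_neg]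
        rw [hswap]
        have h1 : |∫ y in r..a, deriv g y| ≤ ∫ y in r..a, M * (a - y) ^ m := by
          rw [← Real.norm_eq_abs]
          refine (intervalIntegral.norm_integral_le_integral_norm h).trans ?_
          apply intervalIntegral.integral_mono_on h
          · exact (hderivCont.norm.intervalIntegrable r a)
          · exact ((continuous_const.mul (((continuous_const.sub continuous_id).pow m))).intervalIntegrable r a)
          · intro x hx
            have h0x : 0 ≤ x := le_trans hr hx.1
            have := hb x h0x
            rw [Real.norm_eq_abs]
            rwa [abs_of_nonpos (by linarith [hx.2] : x - a ≤ 0), neg_sub] at this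
        have h2 : ∫ y in r..a, M * (a - y) ^ m = M * ((a - r) ^ (m+1) / (m+1)) := by
          rw [intervalIntegral.integral_const_mul]
          have := intervalIntegral.integral_comp_sub_left (fun x : ℝ => x ^ m) a (a := r) (b := a)
          rw [this, sub_self, integral_pow]
          ring
        refine h1.trans ?_
        rw [h2, abs_of_nonpos (by linarith : r - a ≤ 0), neg_sub]
        have hpos : (0:ℝ) ≤ (a-r)^(m+1) := pow_nonneg (by linarith) _
        have hle : (a - r)^(m+1) / (m+1) ≤ (a-r)^(m+1) := by
          apply div_le_self hpos; norm_num
        nlinarith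
    calc |g r| = |∫ y in a..r, deriv g y| := by rw [hftc, hga, sub_zero]
    _ ≤ M * |r - a| ^ (m + 1) := hbnd


lemma keyFTC (F g : ℝ → ℝ) (a : ℝ) (ha : 0 < a)
    (hF : ∀ x : ℝ, x ≠ a → HasDerivAt F (g x) x)
    (hFa : ContinuousAt F a)
    (hg : IntegrableOn g (Ioi 0))
    (htop : Tendsto F atTop (nhds 0)) :
    ∫ x in Ioi (0:ℝ), g x = -F 0 := by
  have hsplit : Ioc (0:ℝ) a ∪ Ioi a = Ioi 0 := Ioc_union_Ioi_eq_Ioi ha.le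
  have hcontF : ∀ x : ℝ, ContinuousAt F x := by
    intro x
    by_cases hx : x = a
    · rwa [hx]
    · exact (hF x hx).continuousAt
  have part1 : ∫ x in Ioc (0:ℝ) a, g x = F a - F 0 := by
    rw [← intervalIntegral.integral_of_le ha.le]
    apply intervalIntegral.integral_eq_sub_of_hasDeriv_right_of_le ha.le
    · exact fun x _ => (hcontF x).continuousWithinAt
    · intro x hx
      exact (hF x (ne_of_lt hx.2)).hasDerivWithinAt
    · rw [intervalIntegrable_iff_integrableOn_Ioc_of_le ha.le]
      exact hg.mono_set (fun x hx => hx.1)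
  have part2 : ∫ x in Ioi a, g x = 0 - F a := by
    apply integral_Ioi_of_hasDerivAt_of_tendsto (hFa.continuousWithinAt)
      (fun x hx => hF x (ne_of_gt hx)) (hg.mono_set (fun x hx => lt_trans ha hx)) htop
  rw [← hsplit, setIntegral_union (Ioc_disjoint_Ioi le_rfl) measurableSet_Ioi
    (hg.mono_set (by rw [← hsplit]; exact subset_union_left))
    (hg.mono_set (by rw [← hsplit]; exact subset_union_right)), part1, part2]
  ring


lemma intLog (a : ℝ) (ha : 0 < a) (χ : ℝ → ℝ) (hχ : Continuous χ) (C0 C3 : ℝ)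
    (h0 : ∀ r : ℝ, 0 ≤ r → |χ r| ≤ C0) (h3 : ∀ r : ℝ, 0 ≤ r → |χ r| ≤ C3 / (1 + r) ^ 3) :
    IntegrableOn (fun r : ℝ => Real.log |r - a| * χ r) (Ioi 0) := by
  have hmeas : ∀ s : Set ℝ, AEStronglyMeasurable (fun r : ℝ => Real.log |r - a| * χ r)
      (volume.restrict s) := by
    intro s
    exact ((Real.measurable_log.comp ((measurable_id.sub_const a).abs)).mul
      hχ.measurable).aestronglyMeasurable
  set C0' := max C0 0 with hC0'
  set C3' := max C3 0 with hC3'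
  have hC0'0 : 0 ≤ C0' := le_max_right _ _
  have hC3'0 : 0 ≤ C3' := le_max_right _ _
  set R := max a 1 with hR
  set c := 2 * max 0 (Real.log R) with hc
  have hc0 : 0 ≤ c := by positivity
  have pieceA : IntegrableOn (fun r : ℝ => Real.log |r - a| * χ r) (Ioc 0 (a+1)) := by
    have hbound : Integrable (fun r : ℝ => C0' * (c - Real.log (r - a)))
        (volume.restrict (Ioc (0:ℝ) (a+1))) := by
      exact (((integrableOn_const measure_Ioc_lt_top.ne).sub (logShift a ha)).const_mul _)
    apply Integrable.mono' hbound (hmeas _)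
    filter_upwards [ae_restrict_mem measurableSet_Ioc] with r hr
    have hrR : |r - a| ≤ R := by
      rcases le_total r a with h | h
      · rw [abs_of_nonpos (by linarith), neg_sub]
        have : a - r ≤ a := by linarith [hr.1]
        exact this.trans (le_max_left _ _)
      · rw [abs_of_nonneg (by linarith)]
        have : r - a ≤ 1 := by linarith [hr.2]
        exact this.trans (le_max_right _ _)
    have hlogabs : |Real.log (r - a)| ≤ c - Real.log (r - a) := by
      rcases le_or_gt (Real.log (r - a)) 0 with h | h
      · rw [abs_of_nonpos h]; linarith
      · rw [abs_of_pos h]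
        have hlogR : Real.log (r - a) ≤ Real.log R := by
          rw [← Real.log_abs, show (r:ℝ) - a = r - a from rfl]
          have h1 : (1:ℝ) < |r - a| := by
            by_contra hcon
            push_neg at hcon
            have := Real.log_nonpos (abs_nonneg _) hcon
            rw [Real.log_abs] at this; linarith
          exact Real.log_le_log (by linarith) hrR
        have : Real.log R ≤ max 0 (Real.log R) := le_max_right _ _
        simp only [hc]; linarith
    have h1 : ‖Real.log |r - a| * χ r‖ = |Real.log (r - a)| * |χ r| := by
      rw [Real.norm_eq_abs, abs_mul, Real.log_abs]
    rw [h1]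
    calc |Real.log (r - a)| * |χ r| ≤ (c - Real.log (r - a)) * C0' := by
          apply mul_le_mul hlogabs ((h0 r hr.1.le).trans (le_max_left _ _)) (abs_nonneg _)
          linarith [abs_nonneg (Real.log (r-a))]
    _ = C0' * (c - Real.log (r - a)) := by ring
  have pieceB : IntegrableOn (fun r : ℝ => Real.log |r - a| * χ r) (Ioi (a+1)) := by
    have hbound : Integrable (fun r : ℝ => C3' * ((1 + r) ^ 2)⁻¹)
        (volume.restrict (Ioi (a+1))) := (intSq (a+1) (by linarith)).const_mul _
    apply Integrable.mono' hbound (hmeas _)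
    filter_upwards [ae_restrict_mem measurableSet_Ioi] with r hr
    simp only [mem_Ioi] at hr
    have hr0 : (0:ℝ) ≤ r := by linarith
    have hra : (1:ℝ) ≤ r - a := by linarith
    have h1r : (0:ℝ) < 1 + r := by linarith
    have hlog1 : 0 ≤ Real.log (r - a) := Real.log_nonneg hra
    have hlog2 : Real.log (r - a) ≤ 1 + r := by
      have := Real.log_le_sub_one_of_pos (by linarith : (0:ℝ) < r - a)
      linarith
    have hχ3 : |χ r| ≤ C3' / (1 + r) ^ 3 := by
      refine (h3 r hr0).trans ?_
      gcongr
      exact le_max_left _ _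
    have h1 : ‖Real.log |r - a| * χ r‖ = Real.log (r - a) * |χ r| := by
      rw [Real.norm_eq_abs, abs_mul, Real.log_abs, abs_of_nonneg hlog1]
    rw [h1]
    calc Real.log (r - a) * |χ r| ≤ (1 + r) * (C3' / (1 + r) ^ 3) :=
          mul_le_mul hlog2 hχ3 (abs_nonneg _) (by linarith)
    _ = C3' * ((1 + r) ^ 2)⁻¹ := by field_simp
  have hu : Ioc (0:ℝ) (a+1) ∪ Ioi (a+1) = Ioi 0 := Ioc_union_Ioi_eq_Ioi (by linarith)
  rw [← hu]
  exact pieceA.union pieceB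


lemma intPow (ψ : ℝ → ℝ) (a : ℝ) (ha : 0 < a) (k : ℕ) (hk : 1 ≤ k)
    (hψ : Continuous ψ) (M C : ℝ) (hM0 : 0 ≤ M)
    (hM : ∀ r : ℝ, 0 ≤ r → |ψ r| ≤ M * |r - a| ^ k)
    (hC : ∀ r : ℝ, 0 ≤ r → |ψ r| ≤ C / (1 + r) ^ 2) :
    IntegrableOn (fun r : ℝ => ψ r / (r - a) ^ k) (Ioi 0) := by
  have hmeas : ∀ s : Set ℝ, AEStronglyMeasurable (fun r : ℝ => ψ r / (r - a) ^ k)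
      (volume.restrict s) := by
    intro s
    exact (hψ.measurable.div (((measurable_id.sub_const a).pow_const k))).aestronglyMeasurable
  set C' := max C 0 with hC'
  have hC'0 : 0 ≤ C' := le_max_right _ _
  have pieceA : IntegrableOn (fun r : ℝ => ψ r / (r - a) ^ k) (Ioc 0 (a+1)) := by
    have hbound : Integrable (fun _ : ℝ => M) (volume.restrict (Ioc (0:ℝ) (a+1))) :=
      integrableOn_const measure_Ioc_lt_top.ne
    apply Integrable.mono' hbound (hmeas _)
    filter_upwards [ae_restrict_mem measurableSet_Ioc] with r hr
    rw [Real.norm_eq_abs]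
    by_cases hra : r = a
    · subst hra
      simp [zero_pow (by omega : k ≠ 0), hM0]
    · have hpos : (0:ℝ) < |r - a| ^ k := by
        apply pow_pos (abs_pos.mpr (sub_ne_zero.mpr hra))
      rw [abs_div, abs_pow]
      rw [div_le_iff₀ hpos]
      calc |ψ r| ≤ M * |r - a| ^ k := hM r hr.1.le
      _ = M * |r - a| ^ k := rfl
  have pieceB : IntegrableOn (fun r : ℝ => ψ r / (r - a) ^ k) (Ioi (a+1)) := by
    have hbound : Integrable (fun r : ℝ => C' * ((1 + r) ^ 2)⁻¹)
        (volume.restrict (Ioi (a+1))) := (intSq (a+1) (by linarith)).const_mul _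
    apply Integrable.mono' hbound (hmeas _)
    filter_upwards [ae_restrict_mem measurableSet_Ioi] with r hr
    simp only [mem_Ioi] at hr
    have hr0 : (0:ℝ) ≤ r := by linarith
    have hra : (1:ℝ) ≤ r - a := by linarith
    have hone : (1:ℝ) ≤ |r - a| ^ k := by
      rw [abs_of_nonneg (by linarith)]
      exact one_le_pow₀ hra
    rw [Real.norm_eq_abs, abs_div, abs_pow]
    calc |ψ r| / |r - a| ^ k ≤ |ψ r| / 1 := by
          apply div_le_div_of_nonneg_left ?_ ?_ hone
          · exact abs_nonneg _
          · norm_num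
    _ = |ψ r| := div_one _
    _ ≤ C / (1 + r) ^ 2 := hC r hr0
    _ ≤ C' * ((1 + r) ^ 2)⁻¹ := by
          rw [div_eq_mul_inv]
          gcongr
          exact le_max_left _ _
  have hu : Ioc (0:ℝ) (a+1) ∪ Ioi (a+1) = Ioi 0 := Ioc_union_Ioi_eq_Ioi (by linarith)
  rw [← hu]
  exact pieceA.union pieceB


lemma sumId (a : ℝ) (ha : 0 < a) (k : ℕ) (hk : 1 ≤ k) (ψ : ℝ → ℝ) :
    (1/(k:ℝ)) * (∑ l ∈ Finset.Icc 1 (k-1),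
        (-a) ^ ((l : ℤ) - (k : ℤ)) / (Nat.descFactorial (k - 1) l : ℝ) *
          iteratedDeriv l ψ 0)
      + (1/(k:ℝ)) * (ψ 0 / (-a) ^ k)
    = ∑ l ∈ Finset.Icc 1 k,
        (-a) ^ ((l : ℤ) - ((k:ℤ)+1)) / (Nat.descFactorial k l : ℝ) *
          iteratedDeriv (l - 1) ψ 0 := by
  have hkR : (k:ℝ) ≠ 0 := Nat.cast_ne_zero.mpr (by omega)
  have hna : (-a) ≠ 0 := by intro h; rw [neg_eq_zero] at h; linarith
  rw [← Finset.Ico_add_one_right_eq_Icc, ← Finset.Ico_add_one_right_eq_Icc, Finset.sum_Ico_eq_sum_range,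
    Finset.sum_Ico_eq_sum_range]
  rw [show (k-1) + 1 - 1 = k - 1 from by omega, show k + 1 - 1 = k from by omega]
  conv_rhs => rw [show k = (k-1) + 1 from by omega]
  rw [Finset.sum_range_succ']
  rw [Finset.mul_sum]
  congr 1
  · apply Finset.sum_congr rfl
    intro i hi
    simp only [Finset.mem_range] at hi
    rw [show 1 + (i+1) = (1+i)+1 from by omega]
    rw [Nat.succ_descFactorial_succ]
    rw [show k - 1 + 1 = k from by omega]
    rw [show (((1+i)+1 : ℕ) : ℤ) - ((k:ℤ)+1) = ((1+i : ℕ):ℤ) - (k:ℤ) from by push_cast; ring]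
    rw [show (1+i)+1-1 = 1+i from by omega]
    push_cast
    ring
  · rw [show k - 1 + 1 = k from by omega, Nat.descFactorial_one, iteratedDeriv_zero]
    rw [show ((1+0:ℕ):ℤ) - ((k:ℤ)+1) = -(k:ℤ) from by push_cast; ring]
    rw [zpow_neg, zpow_natCast]
    ring


theorem base (ψ : ℝ → ℝ) (a : ℝ) (ha : 0 < a)
    (hsmooth : ContDiff ℝ (⊤:ℕ∞) ψ)
    (hdecay : ∀ j N : ℕ, ∃ C : ℝ, ∀ r : ℝ, 0 ≤ r →
      |iteratedDeriv j ψ r| ≤ C / (1 + r) ^ N)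
    (hvanish : ∀ j : ℕ, j < 1 → iteratedDeriv j ψ a = 0) :
    IntegrableOn (fun r : ℝ => ψ r / (r - a) ^ 1) (Ioi 0) ∧
    IntegrableOn (fun r : ℝ => Real.log |r - a| * iteratedDeriv 1 ψ r) (Ioi 0) ∧
    ∫ r in Ioi (0 : ℝ), ψ r / (r - a) ^ 1 =
      (-1 / (Nat.factorial 0 : ℝ)) *
        (∫ r in Ioi (0 : ℝ), Real.log |r - a| * iteratedDeriv 1 ψ r) +
      ((∑ l ∈ Finset.Icc (1:ℕ) 0,
          (-a) ^ ((l : ℤ) - (1 : ℤ)) / (Nat.descFactorial 0 l : ℝ) *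
            iteratedDeriv (l - 1) ψ 0) -
        Real.log a / (Nat.factorial 0 : ℝ) * iteratedDeriv 0 ψ 0) := by
  have hdiff : Differentiable ℝ ψ := hsmooth.differentiable (by simp)
  have hcont : Continuous ψ := hsmooth.continuous
  have hd1cont : Continuous (iteratedDeriv 1 ψ) :=
    hsmooth.continuous_iteratedDeriv 1 (by exact_mod_cast le_top)
  -- bounds
  obtain ⟨M, hM⟩ := hdecay 1 0
  have hM' : ∀ r : ℝ, 0 ≤ r → |iteratedDeriv 1 ψ r| ≤ M := by
    intro r hr; simpa using hM r hr
  have hM0 : 0 ≤ M := le_trans (abs_nonneg _) (hM' 0 le_rfl)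
  have hvb : ∀ r : ℝ, 0 ≤ r → |ψ r| ≤ M * |r - a| ^ 1 :=
    vbound a M ha 1 ψ hsmooth (by intro i hi; exact hvanish i hi) hM'
  obtain ⟨C2, hC2⟩ := hdecay 0 2
  have hC2' : ∀ r : ℝ, 0 ≤ r → |ψ r| ≤ C2 / (1 + r) ^ 2 := by
    intro r hr; simpa [iteratedDeriv_zero] using hC2 r hr
  have hC20 : 0 ≤ C2 := by
    have := (abs_nonneg (ψ 0)).trans (hC2' 0 le_rfl); nlinarith [this]
  obtain ⟨C0, hC0⟩ := hdecay 1 0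
  obtain ⟨C3, hC3⟩ := hdecay 1 3
  -- integrabilities
  have int1 : IntegrableOn (fun r : ℝ => ψ r / (r - a) ^ 1) (Ioi 0) :=
    intPow ψ a ha 1 le_rfl hcont M C2 hM0 hvb hC2'
  have int2 : IntegrableOn (fun r : ℝ => Real.log |r - a| * iteratedDeriv 1 ψ r) (Ioi 0) :=
    intLog a ha _ hd1cont C0 C3 (fun r hr => by simpa using hC0 r hr) (fun r hr => hC3 r hr)
  refine ⟨int1, int2, ?_⟩
  -- FTC
  set F : ℝ → ℝ := fun r => ψ r * Real.log (r - a) with hF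
  set g : ℝ → ℝ := fun x => Real.log |x - a| * iteratedDeriv 1 ψ x + ψ x / (x - a) ^ 1 with hgdef
  have hFd : ∀ x : ℝ, x ≠ a → HasDerivAt F (g x) x := by
    intro x hx
    have hxa : x - a ≠ 0 := sub_ne_zero.mpr hx
    have h1 : HasDerivAt (fun r : ℝ => r - a) 1 x := (hasDerivAt_id x).sub_const a
    have hlog : HasDerivAt (fun r : ℝ => Real.log (r - a)) (1 / (x - a)) x := h1.log hxa
    have := ((hdiff x).hasDerivAt).mul hlog
    refine this.congr_deriv ?_
    simp only [hgdef, pow_one]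
    rw [Real.log_abs, iteratedDeriv_one]
    ring
  have hFa : ContinuousAt F a := by
    have hFaval : F a = 0 := by simp [hF]
    rw [ContinuousAt, hFaval]
    have habsc : Continuous (fun r : ℝ => abs (r - a)) := (continuous_id.sub continuous_const).abs
    have h0 : Tendsto (fun r : ℝ => abs (r - a) * Real.log (abs (r - a))) (nhds a) (nhds 0) := by
      have hc : Continuous (fun r : ℝ => abs (r - a) * Real.log (abs (r - a))) :=
        Real.continuous_mul_log.comp habsc
      have := hc.tendsto a
      simpa using this
    apply squeeze_zero_norm' (a := fun r => M * abs (abs (r - a) * Real.log (abs (r - a))))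
    · filter_upwards [eventually_gt_nhds ha] with r hr0'
      have hr0 : (0:ℝ) ≤ r := hr0'.le
      have h1 : ‖F r‖ = |ψ r| * |Real.log (r - a)| := by
        rw [hF]; simp [abs_mul]
      rw [h1]
      calc |ψ r| * |Real.log (r - a)|
          ≤ (M * |r - a| ^ 1) * |Real.log (r - a)| :=
            mul_le_mul_of_nonneg_right (hvb r hr0) (abs_nonneg _)
      _ = M * abs (abs (r - a) * Real.log (abs (r - a))) := by
            rw [abs_mul, abs_abs, Real.log_abs, pow_one]; ring
    · simpa using (h0.abs.const_mul M)
  have htop : Tendsto F atTop (nhds 0) := by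
    apply squeeze_zero_norm' (a := fun r => C2 * (1 + r)⁻¹)
    · filter_upwards [eventually_ge_atTop (a + 1)] with r hr
      have hr0 : (0:ℝ) ≤ r := by linarith
      have h1r : (0:ℝ) < 1 + r := by linarith
      have hra : (1:ℝ) ≤ r - a := by linarith
      have hlog1 : 0 ≤ Real.log (r - a) := Real.log_nonneg hra
      have hlog2 : Real.log (r - a) ≤ 1 + r := by
        have := Real.log_le_sub_one_of_pos (by linarith : (0:ℝ) < r - a)
        linarith
      have h1 : ‖F r‖ = |ψ r| * |Real.log (r - a)| := by rw [hF]; simp [abs_mul]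
      rw [h1, abs_of_nonneg hlog1]
      calc |ψ r| * Real.log (r - a) ≤ (C2 / (1 + r) ^ 2) * (1 + r) :=
            mul_le_mul (hC2' r hr0) hlog2 hlog1 (by positivity)
      _ = C2 * (1 + r)⁻¹ := by field_simp
    · have : Tendsto (fun r : ℝ => (1 + r)⁻¹) atTop (nhds 0) :=
        (tendsto_atTop_add_const_left _ 1 tendsto_id).inv_tendsto_atTop
      simpa using this.const_mul C2
  have hgint : IntegrableOn g (Ioi 0) := int2.add int1
  have hkey := keyFTC F g a ha hFd hFa hgint htop
  have hF0 : F 0 = ψ 0 * Real.log a := by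
    simp [hF, zero_sub, Real.log_neg_eq_log]
  have hsplit : ∫ x in Ioi (0:ℝ), g x =
      (∫ x in Ioi (0:ℝ), Real.log |x - a| * iteratedDeriv 1 ψ x) +
      ∫ x in Ioi (0:ℝ), ψ x / (x - a) ^ 1 := integral_add int2 int1
  rw [hsplit, hF0] at hkey
  simp only [Nat.factorial_zero, Nat.cast_one, Finset.Icc_self, Finset.Icc_eq_empty_of_lt
    (by norm_num : (1:ℕ) > 0)]
  simp only [Finset.sum_empty, iteratedDeriv_zero]
  linarith [hkey]


theorem step (a : ℝ) (ha : 0 < a) (k : ℕ) (hk : 1 ≤ k)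
    (IH : ∀ ψ : ℝ → ℝ, ContDiff ℝ (⊤:ℕ∞) ψ →
      (∀ j N : ℕ, ∃ C : ℝ, ∀ r : ℝ, 0 ≤ r → |iteratedDeriv j ψ r| ≤ C / (1 + r) ^ N) →
      (∀ j : ℕ, j < k → iteratedDeriv j ψ a = 0) →
      IntegrableOn (fun r : ℝ => ψ r / (r - a) ^ k) (Ioi 0) ∧
      IntegrableOn (fun r : ℝ => Real.log |r - a| * iteratedDeriv k ψ r) (Ioi 0) ∧
      ∫ r in Ioi (0 : ℝ), ψ r / (r - a) ^ k =
        (-1 / (Nat.factorial (k - 1) : ℝ)) *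
          (∫ r in Ioi (0 : ℝ), Real.log |r - a| * iteratedDeriv k ψ r) +
        ((∑ l ∈ Finset.Icc 1 (k - 1),
            (-a) ^ ((l : ℤ) - (k : ℤ)) / (Nat.descFactorial (k - 1) l : ℝ) *
              iteratedDeriv (l - 1) ψ 0) -
          Real.log a / (Nat.factorial (k - 1) : ℝ) * iteratedDeriv (k - 1) ψ 0))
    (ψ : ℝ → ℝ) (hsmooth : ContDiff ℝ (⊤:ℕ∞) ψ)
    (hdecay : ∀ j N : ℕ, ∃ C : ℝ, ∀ r : ℝ, 0 ≤ r → |iteratedDeriv j ψ r| ≤ C / (1 + r) ^ N)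
    (hvanish : ∀ j : ℕ, j < k + 1 → iteratedDeriv j ψ a = 0) :
    IntegrableOn (fun r : ℝ => ψ r / (r - a) ^ (k+1)) (Ioi 0) ∧
    IntegrableOn (fun r : ℝ => Real.log |r - a| * iteratedDeriv (k+1) ψ r) (Ioi 0) ∧
    ∫ r in Ioi (0 : ℝ), ψ r / (r - a) ^ (k+1) =
      (-1 / (Nat.factorial (k + 1 - 1) : ℝ)) *
        (∫ r in Ioi (0 : ℝ), Real.log |r - a| * iteratedDeriv (k+1) ψ r) +
      ((∑ l ∈ Finset.Icc 1 (k + 1 - 1),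
          (-a) ^ ((l : ℤ) - ((k+1 : ℕ) : ℤ)) / (Nat.descFactorial (k + 1 - 1) l : ℝ) *
            iteratedDeriv (l - 1) ψ 0) -
        Real.log a / (Nat.factorial (k + 1 - 1) : ℝ) * iteratedDeriv (k + 1 - 1) ψ 0) := by
  have hkR : (k:ℝ) ≠ 0 := Nat.cast_ne_zero.mpr (by omega)
  have hkR0 : (0:ℝ) < (k:ℝ) := by exact_mod_cast Nat.pos_of_ne_zero (by omega)
  have hdiff : Differentiable ℝ ψ := hsmooth.differentiable (by simp)
  have hcont : Continuous ψ := hsmooth.continuous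
  -- derivative hypotheses
  have hφs : ContDiff ℝ (⊤:ℕ∞) (deriv ψ) := (contDiff_infty_iff_deriv.mp hsmooth).2
  have hφdecay : ∀ j N : ℕ, ∃ C : ℝ, ∀ r : ℝ, 0 ≤ r →
      |iteratedDeriv j (deriv ψ) r| ≤ C / (1 + r) ^ N := by
    intro j N
    obtain ⟨C, hC⟩ := hdecay (j+1) N
    exact ⟨C, fun r hr => by rw [← iteratedDeriv_succ']; exact hC r hr⟩
  have hφvan : ∀ j : ℕ, j < k → iteratedDeriv j (deriv ψ) a = 0 := by
    intro j hj
    rw [← iteratedDeriv_succ']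
    exact hvanish (j+1) (by omega)
  obtain ⟨I1φ, I2φ, Eφ⟩ := IH (deriv ψ) hφs hφdecay hφvan
  -- integrability conclusions
  obtain ⟨M, hMd⟩ := hdecay (k+1) 0
  have hM' : ∀ r : ℝ, 0 ≤ r → |iteratedDeriv (k+1) ψ r| ≤ M := by
    intro r hr; simpa using hMd r hr
  have hM0 : 0 ≤ M := le_trans (abs_nonneg _) (hM' 0 le_rfl)
  have hvb : ∀ r : ℝ, 0 ≤ r → |ψ r| ≤ M * |r - a| ^ (k+1) :=
    vbound a M ha (k+1) ψ hsmooth hvanish hM'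
  obtain ⟨C2, hC2⟩ := hdecay 0 2
  have hC2' : ∀ r : ℝ, 0 ≤ r → |ψ r| ≤ C2 / (1 + r) ^ 2 := by
    intro r hr; simpa [iteratedDeriv_zero] using hC2 r hr
  have int1 : IntegrableOn (fun r : ℝ => ψ r / (r - a) ^ (k+1)) (Ioi 0) :=
    intPow ψ a ha (k+1) (by omega) hcont M C2 hM0 hvb hC2'
  have int2 : IntegrableOn (fun r : ℝ => Real.log |r - a| * iteratedDeriv (k+1) ψ r) (Ioi 0) := by
    have := I2φ
    simp only [← iteratedDeriv_succ'] at this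
    exact this
  refine ⟨int1, int2, ?_⟩
  -- FTC part
  set F : ℝ → ℝ := fun r => -(1/(k:ℝ)) * (ψ r / (r - a) ^ k) with hFdef
  set g : ℝ → ℝ := fun x => ψ x / (x - a) ^ (k+1) + (-(1/(k:ℝ))) * (deriv ψ x / (x - a) ^ k)
    with hgdef
  have hFd : ∀ x : ℝ, x ≠ a → HasDerivAt F (g x) x := by
    intro x hx
    have hxa : x - a ≠ 0 := sub_ne_zero.mpr hx
    have h1 : HasDerivAt (fun r : ℝ => r - a) 1 x := (hasDerivAt_id x).sub_const a
    have h2 : HasDerivAt (fun r : ℝ => (r - a) ^ k) ((k:ℝ) * (x - a) ^ (k-1) * 1) x := h1.pow k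
    have hq := (((hdiff x).hasDerivAt).div h2 (pow_ne_zero k hxa)).const_mul (-(1/(k:ℝ)))
    refine hq.congr_deriv ?_
    have e1 : (x-a)^k = (x-a)^(k-1) * (x-a) := by
      conv_lhs => rw [show k = (k-1) + 1 from by omega]
      rw [pow_succ]
    have e2 : (x-a)^(k+1) = ((x-a)^(k-1) * (x-a)) * (x-a) := by
      rw [pow_succ, e1]
    simp only [hgdef, e1, e2]
    have hp : (x-a)^(k-1) ≠ 0 := pow_ne_zero _ hxa
    field_simp
    ring
  have hFaval : F a = 0 := by
    simp [hFdef, sub_self, zero_pow (show k ≠ 0 from by omega)]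
  have hFa : ContinuousAt F a := by
    rw [ContinuousAt, hFaval]
    apply squeeze_zero_norm' (a := fun r => (1/(k:ℝ)) * M * |r - a|)
    · filter_upwards [eventually_gt_nhds ha] with r hr0'
      have hr0 : (0:ℝ) ≤ r := hr0'.le
      by_cases hra : r = a
      · rw [hra, hFaval]
        simp
      · have hxa : r - a ≠ 0 := sub_ne_zero.mpr hra
        have habs : (0:ℝ) < |r - a| := abs_pos.mpr hxa
        have h1 : ‖F r‖ = (1/(k:ℝ)) * (|ψ r| / |r - a| ^ k) := by
          rw [hFdef]
          simp only [Real.norm_eq_abs, abs_mul, abs_neg, abs_div, abs_pow, abs_one, Nat.abs_cast]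
        rw [h1, mul_assoc]
        apply mul_le_mul_of_nonneg_left ?_ (by positivity : (0:ℝ) ≤ 1/(k:ℝ))
        rw [div_le_iff₀ (by positivity : (0:ℝ) < |r - a| ^ k)]
        calc |ψ r| ≤ M * |r - a| ^ (k+1) := hvb r hr0
        _ = M * |r - a| * |r - a| ^ k := by rw [pow_succ]; ring
    · have hc : Continuous (fun r : ℝ => (1/(k:ℝ)) * M * |r - a|) :=
        continuous_const.mul ((continuous_id.sub continuous_const).abs)
      have := hc.tendsto a
      simpa using this
  have htop : Tendsto F atTop (nhds 0) := by
    set C2' := max C2 0 with hC2def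
    apply squeeze_zero_norm' (a := fun r => C2' * (1 + r)⁻¹)
    · filter_upwards [eventually_ge_atTop (a + 1)] with r hr
      have hr0 : (0:ℝ) ≤ r := by linarith
      have h1r : (0:ℝ) < 1 + r := by linarith
      have hra1 : (1:ℝ) ≤ r - a := by linarith
      have hone : (1:ℝ) ≤ |r - a| ^ k := by
        rw [abs_of_nonneg (by linarith)]
        exact one_le_pow₀ hra1
      have h1 : ‖F r‖ = (1/(k:ℝ)) * (|ψ r| / |r - a| ^ k) := by
        rw [hFdef]
        simp only [Real.norm_eq_abs, abs_mul, abs_neg, abs_div, abs_pow, abs_one, Nat.abs_cast]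
      rw [h1]
      have hk1 : 1/(k:ℝ) ≤ 1 := by
        rw [div_le_one hkR0]; exact_mod_cast hk
      calc (1/(k:ℝ)) * (|ψ r| / |r - a| ^ k) ≤ 1 * (|ψ r| / 1) := by
            apply mul_le_mul hk1 ?_ (by positivity) zero_le_one
            apply div_le_div_of_nonneg_left (abs_nonneg _) ?_ hone
            norm_num
      _ = |ψ r| := by ring
      _ ≤ C2 / (1 + r) ^ 2 := hC2' r hr0
      _ ≤ C2' * (1 + r)⁻¹ := by
            rw [div_eq_mul_inv]
            have h2 : ((1+r)^2)⁻¹ ≤ (1+r)⁻¹ := by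
              apply inv_anti₀ h1r
              nlinarith
            apply mul_le_mul (le_max_left _ _) h2 (by positivity) (le_max_right _ _)
    · have : Tendsto (fun r : ℝ => (1 + r)⁻¹) atTop (nhds 0) :=
        (tendsto_atTop_add_const_left _ 1 tendsto_id).inv_tendsto_atTop
      simpa using this.const_mul C2'
  have hgint : IntegrableOn g (Ioi 0) := int1.add (I1φ.const_mul _)
  have hkey := keyFTC F g a ha hFd hFa hgint htop
  have hsplit : ∫ x in Ioi (0:ℝ), g x =
      (∫ x in Ioi (0:ℝ), ψ x / (x - a) ^ (k+1)) +
      (-(1/(k:ℝ))) * ∫ x in Ioi (0:ℝ), deriv ψ x / (x - a) ^ k := by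
    rw [hgdef]
    rw [integral_add int1 (I1φ.const_mul _), MeasureTheory.integral_const_mul]
  have hF0 : F 0 = -(1/(k:ℝ)) * (ψ 0 / (-a) ^ k) := by
    rw [hFdef]; norm_num
  rw [hsplit, hF0] at hkey
  -- rewrite Eφ in terms of ψ
  have hEφ : ∫ r in Ioi (0:ℝ), deriv ψ r / (r - a) ^ k =
      (-1 / (Nat.factorial (k - 1) : ℝ)) *
        (∫ r in Ioi (0 : ℝ), Real.log |r - a| * iteratedDeriv (k+1) ψ r) +
      ((∑ l ∈ Finset.Icc 1 (k - 1),
          (-a) ^ ((l : ℤ) - (k : ℤ)) / (Nat.descFactorial (k - 1) l : ℝ) *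
            iteratedDeriv l ψ 0) -
        Real.log a / (Nat.factorial (k - 1) : ℝ) * iteratedDeriv k ψ 0) := by
    rw [Eφ]
    congr 1
    · rw [← iteratedDeriv_succ']
    congr 1
    · apply Finset.sum_congr rfl
      intro l hl
      simp only [Finset.mem_Icc] at hl
      rw [← iteratedDeriv_succ', show l - 1 + 1 = l from by omega]
    · rw [← iteratedDeriv_succ', show k - 1 + 1 = k from by omega]
  rw [hEφ] at hkey
  -- final algebra
  have hsum := sumId a ha k hk ψ
  have hfacne : (Nat.factorial (k-1) : ℝ) ≠ 0 := Nat.cast_ne_zero.mpr (Nat.factorial_ne_zero _)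
  rw [show k + 1 - 1 = k from by omega] at *
  have hexp : ∀ l : ℕ, ((l : ℤ) - ((k+1 : ℕ) : ℤ)) = ((l:ℤ) - ((k:ℤ)+1)) := by
    intro l; push_cast; ring
  simp only [hexp]
  rw [← hsum]
  have hfceq : (Nat.factorial k : ℝ) = (k:ℝ) * (Nat.factorial (k-1) : ℝ) := by
    conv_lhs => rw [show k = (k-1) + 1 from by omega]
    rw [Nat.factorial_succ, Nat.cast_mul, show (k-1) + 1 = k from by omega]
  rw [hfceq]
  linear_combination hkey



theorem aux (a : ℝ) (ha : 0 < a) : ∀ k : ℕ, 1 ≤ k → ∀ ψ : ℝ → ℝ,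
    ContDiff ℝ (⊤:ℕ∞) ψ →
    (∀ j N : ℕ, ∃ C : ℝ, ∀ r : ℝ, 0 ≤ r → |iteratedDeriv j ψ r| ≤ C / (1 + r) ^ N) →
    (∀ j : ℕ, j < k → iteratedDeriv j ψ a = 0) →
    IntegrableOn (fun r : ℝ => ψ r / (r - a) ^ k) (Ioi 0) ∧
    IntegrableOn (fun r : ℝ => Real.log |r - a| * iteratedDeriv k ψ r) (Ioi 0) ∧
    ∫ r in Ioi (0 : ℝ), ψ r / (r - a) ^ k =
      (-1 / (Nat.factorial (k - 1) : ℝ)) *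
        (∫ r in Ioi (0 : ℝ), Real.log |r - a| * iteratedDeriv k ψ r) +
      ((∑ l ∈ Finset.Icc 1 (k - 1),
          (-a) ^ ((l : ℤ) - (k : ℤ)) / (Nat.descFactorial (k - 1) l : ℝ) *
            iteratedDeriv (l - 1) ψ 0) -
        Real.log a / (Nat.factorial (k - 1) : ℝ) * iteratedDeriv (k - 1) ψ 0) := by
  intro k hk
  induction k, hk using Nat.le_induction with
  | base => intro ψ h1 h2 h3; exact base ψ a ha h1 h2 h3
  | succ k hk IH => intro ψ h1 h2 h3; exact step a ha k hk IH ψ h1 h2 h3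



/-- With `ψ` smooth and rapidly decaying, `a > 0`, `k ≥ 1`, and
`ψ⁽ʲ⁾(a) = 0` for `0 ≤ j < k`, the absolutely convergent integral
`∫₀^∞ (r-a)^{-k} ψ(r) dr` equals
`(-1/(k-1)!) ∫₀^∞ ln|r-a| ψ⁽ᵏ⁾(r) dr + C₀` with
`C₀ = Σ_{l=1}^{k-1} (-a)^{l-k}/((k-1)_l) ψ⁽ˡ⁻¹⁾(0) − (ln a/(k-1)!) ψ⁽ᵏ⁻¹⁾(0)`. -/
theorem stmt1 (ψ : ℝ → ℝ) (a : ℝ) (ha : 0 < a) (k : ℕ) (hk : 1 ≤ k)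
    (hsmooth : ContDiff ℝ (⊤ : ℕ∞) ψ)
    (hdecay : ∀ j N : ℕ, ∃ C : ℝ, ∀ r : ℝ, 0 ≤ r →
      |iteratedDeriv j ψ r| ≤ C / (1 + r) ^ N)
    (hvanish : ∀ j : ℕ, j < k → iteratedDeriv j ψ a = 0) :
    IntegrableOn (fun r : ℝ => ψ r / (r - a) ^ k) (Ioi 0) ∧
    IntegrableOn (fun r : ℝ => Real.log |r - a| * iteratedDeriv k ψ r) (Ioi 0) ∧
    ∫ r in Ioi (0 : ℝ), ψ r / (r - a) ^ k =
      (-1 / (Nat.factorial (k - 1) : ℝ)) *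
        (∫ r in Ioi (0 : ℝ), Real.log |r - a| * iteratedDeriv k ψ r) +
      ((∑ l ∈ Finset.Icc 1 (k - 1),
          (-a) ^ ((l : ℤ) - (k : ℤ)) / (Nat.descFactorial (k - 1) l : ℝ) *
            iteratedDeriv (l - 1) ψ 0) -
        Real.log a / (Nat.factorial (k - 1) : ℝ) * iteratedDeriv (k - 1) ψ 0) := by
  exact aux a ha k hk ψ (hsmooth.of_le (by simp)) hdecay hvanish
end
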